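/- arXiv:2506.21235 — 2 statements merged into one kernel-verified Lean document; each statement's English description precedes it below -/
import Mathlib

section
/- Let G be a graph without isolated vertices. Then γ_{gr}(G) + 1 ≤ γ_{gr}^{×2}(G), where γ_{gr}(G) is the Grundy domination number and γ_{gr}^{×2}(G) is the Grundy double domination number. -/
/-!
Take a longest dominating sequence `l` and extend it to a longest double neighbourhood sequence
`l'`. As `G` has no isolated vertices, `l'` is doubly dominating; and `l' ≠ l`, because the vertex
footprinted by the last vertex of `l` is dominated only once by `l`.
-/

open SimpleGraph

variable {V : Type*}

/-- The closed neighborhood of a vertex. -/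
def cnbr (G : SimpleGraph V) (v : V) : Set V := insert v (G.neighborSet v)

/-- The number of vertices in the list `l` that dominate `u` (i.e. whose closed
neighborhood contains `u`). -/
noncomputable def domCount (G : SimpleGraph V) (u : V) (l : List V) : ℕ :=
  {w | w ∈ l ∧ u ∈ cnbr G w}.ncard

/-- A double neighborhood sequence (DNS): a sequence of distinct vertices in which each
vertex dominates some vertex dominated at most once by its predecessors. -/
def IsDNS (G : SimpleGraph V) (l : List V) : Prop :=
  l.Nodup ∧ ∀ i : Fin l.length, ∃ u ∈ cnbr G (l.get i), domCount G u (l.take i) ≤ 1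

/-- A double dominating sequence (DDS): a DNS whose underlying set is doubly dominating. -/
def IsDDS (G : SimpleGraph V) (l : List V) : Prop :=
  IsDNS G l ∧ ∀ v, 2 ≤ domCount G v l

/-- The Grundy double domination number: maximum length of a DDS. -/
noncomputable def gddn (G : SimpleGraph V) : ℕ :=
  sSup {n | ∃ l : List V, IsDDS G l ∧ l.length = n}

/-- The maximum double neighborhood number: maximum length of a DNS. -/
noncomputable def mdnn (G : SimpleGraph V) : ℕ :=
  sSup {n | ∃ l : List V, IsDNS G l ∧ l.length = n}

/-- A legal (Grundy domination) sequence. -/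
def IsLegal (G : SimpleGraph V) (l : List V) : Prop :=
  l.Nodup ∧ ∀ i : Fin l.length, ∃ u ∈ cnbr G (l.get i), domCount G u (l.take i) = 0

/-- A dominating sequence: legal sequence whose underlying set dominates. -/
def IsDomSeq (G : SimpleGraph V) (l : List V) : Prop :=
  IsLegal G l ∧ ∀ v, 1 ≤ domCount G v l

/-- The Grundy domination number: maximum length of a dominating sequence. -/
noncomputable def grundy (G : SimpleGraph V) : ℕ :=
  sSup {n | ∃ l : List V, IsDomSeq G l ∧ l.length = n}

/-- The double domination number: minimum size of a double dominating set. -/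
noncomputable def ddomNum (G : SimpleGraph V) : ℕ :=
  sInf {n | ∃ D : Set V, (∀ v, 2 ≤ {w | w ∈ D ∧ v ∈ cnbr G w}.ncard) ∧ D.ncard = n}

lemma mem_cnbr_comm (G : SimpleGraph V) {u w : V} : u ∈ cnbr G w ↔ w ∈ cnbr G u := by
  simp only [cnbr, Set.mem_insert_iff, mem_neighborSet]
  grind [G.adj_symm]

lemma self_mem_cnbr (G : SimpleGraph V) (v : V) : v ∈ cnbr G v := Set.mem_insert _ _

section domCount

variable (G : SimpleGraph V) {u w : V} {l : List V}

lemma domCount_eq_zero_iff : domCount G u l = 0 ↔ ∀ w ∈ l, u ∉ cnbr G w := by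
  rw [domCount, Set.ncard_eq_zero ((List.finite_toSet l).subset fun _ hw => hw.1)]
  simp [Set.eq_empty_iff_forall_notMem]

lemma notMem_of_domCount_eq_zero (h : domCount G u l = 0) : u ∉ l :=
  fun hu => (domCount_eq_zero_iff G).1 h u hu (self_mem_cnbr G u)

lemma domCount_append_singleton_le : domCount G u (l ++ [w]) ≤ domCount G u l + 1 := by
  have hsub : {x | x ∈ l ++ [w] ∧ u ∈ cnbr G x} ⊆ insert w {x | x ∈ l ∧ u ∈ cnbr G x} := by
    rintro x ⟨hx, hu⟩
    simp only [List.mem_append, List.mem_singleton] at hx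
    rcases hx with hx | rfl
    · exact Or.inr ⟨hx, hu⟩
    · exact Or.inl rfl
  exact (Set.ncard_le_ncard hsub (((List.finite_toSet l).subset fun _ hx => hx.1).insert w)).trans
    (Set.ncard_insert_le _ _)

/-- Otherwise `v` and a neighbour of `v` would both lie in `l`, and both dominate `v`. -/
lemma exists_mem_cnbr_notMem {v : V} (hv : ∃ u, G.Adj v u) (h : domCount G v l ≤ 1) :
    ∃ w ∈ cnbr G v, w ∉ l := by
  obtain ⟨u, hvu⟩ := hv
  by_contra! hc
  have hu : u ∈ cnbr G v := Set.mem_insert_of_mem _ hvu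
  have hsub : ({v, u} : Set V) ⊆ {w | w ∈ l ∧ v ∈ cnbr G w} := by
    rintro w (rfl | rfl)
    · exact ⟨hc w (self_mem_cnbr G w), self_mem_cnbr G w⟩
    · exact ⟨hc w hu, (mem_cnbr_comm G).1 hu⟩
  have := Set.ncard_le_ncard hsub ((List.finite_toSet l).subset fun _ hw => hw.1)
  rw [Set.ncard_pair hvu.ne] at this
  exact absurd h (by unfold domCount; omega)

end domCount

/-- `IsLegal G l` and `IsDNS G l` are `l.Nodup ∧ HasFootprints G p l` for `p = (· = 0)` and
`p = (· ≤ 1)`. -/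
def HasFootprints (G : SimpleGraph V) (p : ℕ → Prop) (l : List V) : Prop :=
  ∀ i : Fin l.length, ∃ u ∈ cnbr G (l.get i), p (domCount G u (l.take i))

lemma hasFootprints_append_singleton_iff {G : SimpleGraph V} {p : ℕ → Prop} {l : List V} {w : V} :
    HasFootprints G p (l ++ [w]) ↔
      HasFootprints G p l ∧ ∃ u ∈ cnbr G w, p (domCount G u l) := by
  have hprefix : ∀ i (hi : i < l.length),
      (∃ u ∈ cnbr G ((l ++ [w])[i]'(by simp; omega)), p (domCount G u ((l ++ [w]).take i))) ↔
        ∃ u ∈ cnbr G l[i], p (domCount G u (l.take i)) := fun i hi => by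
    rw [List.getElem_append_left hi, List.take_append_of_le_length hi.le]
  have hlast : ∀ hi : l.length < (l ++ [w]).length,
      (∃ u ∈ cnbr G (l ++ [w])[l.length], p (domCount G u ((l ++ [w]).take l.length))) ↔
        ∃ u ∈ cnbr G w, p (domCount G u l) := by
    simp
  simp only [HasFootprints, Fin.forall_iff, List.get_eq_getElem]
  constructor
  · intro h
    exact ⟨fun i hi => (hprefix i hi).1 (h i (by simp; omega)), (hlast (by simp)).1 (h _ (by simp))⟩
  · rintro ⟨h, hw⟩ i hi
    rcases Nat.lt_or_eq_of_le (Nat.le_of_lt_succ (by simpa using hi)) with hi' | rfl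
    · exact (hprefix i hi').2 (h i hi')
    · exact (hlast hi).2 hw

lemma IsLegal.isDNS {G : SimpleGraph V} {l : List V} (h : IsLegal G l) : IsDNS G l :=
  ⟨h.1, fun i => (h.2 i).imp fun _ ⟨hu, h0⟩ => ⟨hu, h0.trans_le zero_le_one⟩⟩

lemma IsLegal.append_singleton {G : SimpleGraph V} {l : List V} (h : IsLegal G l) {v : V}
    (hv : domCount G v l = 0) : IsLegal G (l ++ [v]) :=
  ⟨h.1.append (List.nodup_singleton v) (by simpa using notMem_of_domCount_eq_zero G hv),
    (hasFootprints_append_singleton_iff (p := (· = 0))).2 ⟨h.2, v, self_mem_cnbr G v, hv⟩⟩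

lemma IsDNS.append_singleton {G : SimpleGraph V} {l : List V} (h : IsDNS G l) {v w : V}
    (hw : w ∉ l) (hvw : w ∈ cnbr G v) (hv : domCount G v l ≤ 1) : IsDNS G (l ++ [w]) :=
  ⟨h.1.append (List.nodup_singleton w) (by simpa using hw),
    (hasFootprints_append_singleton_iff (p := (· ≤ 1))).2 ⟨h.2, v, (mem_cnbr_comm G).1 hvw, hv⟩⟩

lemma IsLegal.exists_domCount_le_one {G : SimpleGraph V} {l : List V} (h : IsLegal G l)
    (hne : l ≠ []) : ∃ u, domCount G u l ≤ 1 := by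
  obtain ⟨l, w, rfl⟩ := l.eq_nil_or_concat'.resolve_left hne
  obtain ⟨-, u, -, hu⟩ := (hasFootprints_append_singleton_iff (p := (· = 0))).1 h.2
  exact ⟨u, (domCount_append_singleton_le G).trans (by omega)⟩

lemma IsDomSeq.ne_nil [Nonempty V] {G : SimpleGraph V} {l : List V} (h : IsDomSeq G l) :
    l ≠ [] := by
  rintro rfl
  obtain ⟨v⟩ := ‹Nonempty V›
  simpa [domCount] using h.2 v

section maxLength

variable [Fintype V] {P : List V → Prop}

/-- `grundy G` and `gddn G` unfold to `maxLength (IsDomSeq G)` and `maxLength (IsDDS G)`. -/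
noncomputable def maxLength (P : List V → Prop) : ℕ := sSup {n | ∃ l, P l ∧ l.length = n}

lemma bddAbove_lengths (hP : ∀ l, P l → l.Nodup) : BddAbove {n | ∃ l, P l ∧ l.length = n} :=
  ⟨Fintype.card V, by rintro n ⟨l, hl, rfl⟩; exact (hP l hl).length_le_card⟩

lemma length_le_maxLength (hP : ∀ l, P l → l.Nodup) {l : List V} (hl : P l) :
    l.length ≤ maxLength P :=
  le_csSup (bddAbove_lengths hP) ⟨l, hl, rfl⟩

lemma exists_length_eq_maxLength (hP : ∀ l, P l → l.Nodup) (hne : ∃ l, P l) :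
    ∃ l, P l ∧ l.length = maxLength P :=
  let ⟨l, hl⟩ := hne
  Nat.sSup_mem (s := {n | ∃ l, P l ∧ l.length = n}) ⟨l.length, l, hl, rfl⟩ (bddAbove_lengths hP)

end maxLength

lemma exists_isDomSeq [Fintype V] (G : SimpleGraph V) : ∃ l, IsDomSeq G l := by
  obtain ⟨l, hl, hlen⟩ := exists_length_eq_maxLength (P := IsLegal G) (fun _ h => h.1)
    ⟨[], List.nodup_nil, fun i => i.elim0⟩
  refine ⟨l, hl, fun v => Nat.one_le_iff_ne_zero.2 fun hv => ?_⟩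
  have := length_le_maxLength (fun _ h => h.1) (hl.append_singleton hv)
  simp at this
  omega

/-- A longest double neighborhood sequence extending `l` is doubly dominating: a vertex `v`
dominated at most once is footprinted by any closed neighbour of `v` not yet chosen, and one
exists. -/
lemma IsDNS.exists_isDDS_prefix [Fintype V] {G : SimpleGraph V}
    (hiso : ∀ v : V, ∃ u, G.Adj v u) {l : List V} (hl : IsDNS G l) :
    ∃ l', IsDDS G l' ∧ l <+: l' := by
  have hP (m : List V) (h : IsDNS G m ∧ l <+: m) : m.Nodup := h.1.1
  obtain ⟨l', ⟨hl', hpre⟩, hlen⟩ :=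
    exists_length_eq_maxLength hP ⟨l, hl, List.prefix_refl l⟩
  refine ⟨l', ⟨hl', fun v => ?_⟩, hpre⟩
  by_contra! hv
  obtain ⟨w, hwv, hwl⟩ := exists_mem_cnbr_notMem G (hiso v) (Nat.le_of_lt_succ hv)
  have := length_le_maxLength hP
    ⟨hl'.append_singleton hwl hwv (Nat.le_of_lt_succ hv), hpre.trans (List.prefix_append _ _)⟩
  simp at this
  omega

/-- γ_{gr}(G) + 1 ≤ γ_{gr}^{×2}(G). -/
theorem stmt2 [Fintype V] [Nonempty V] (G : SimpleGraph V)
    (hiso : ∀ v : V, ∃ u, G.Adj v u) :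
    grundy G + 1 ≤ gddn G := by
  obtain ⟨l, hl, hlen⟩ := exists_length_eq_maxLength (fun _ h => h.1.1) (exists_isDomSeq G)
  obtain ⟨l', hl', hpre⟩ := hl.1.isDNS.exists_isDDS_prefix hiso
  obtain ⟨u, hu⟩ := hl.1.exists_domCount_le_one hl.ne_nil
  have hne : l ≠ l' := by
    rintro rfl
    exact absurd (hl'.2 u) (by omega)
  have hlt : l.length < l'.length :=
    lt_of_le_of_ne hpre.length_le fun h => hne (hpre.eq_of_length h)
  calc grundy G + 1 = l.length + 1 := by rw [hlen]; rfl
    _ ≤ l'.length := hlt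
    _ ≤ gddn G := length_le_maxLength (fun _ h => h.1.1) hl'
end

section
/- Let G be a graph with at least one edge and let p be a pendant vertex of G with unique neighbor v. Then both p and v belong to the underlying set of every maximum double neighborhood sequence of G, and there exists a maximum double neighborhood sequence of G whose last two vertices are v followed by p. -/
open SimpleGraph

variable {V : Type*}

/-!
Only `p` and `v` dominate `p`. Hence if a DNS misses `p` or `v`, then `p` has been dominated at
most once, and appending the missing one of the two keeps it a DNS; so a maximum DNS contains
both. Deleting `p` and `v` from a maximum DNS leaves a DNS (subsequences only lower domination
counts), to which `v` and then `p` can be appended again.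
-/

variable {G : SimpleGraph V}

lemma mem_cnbr {u w : V} : u ∈ cnbr G w ↔ u = w ∨ G.Adj w u := Iff.rfl

lemma domCount_mono (u : V) {l m : List V} (h : l ⊆ m) : domCount G u l ≤ domCount G u m :=
  Set.ncard_le_ncard (fun _ hw => ⟨h hw.1, hw.2⟩) (m.finite_toSet.subset fun _ hw => hw.1)

lemma domCount_le_one {u x : V} {l : List V} (h : ∀ w ∈ l, u ∈ cnbr G w → w = x) :
    domCount G u l ≤ 1 :=
  (Set.ncard_le_ncard (fun w hw => h w hw.1 hw.2) (Set.finite_singleton x)).trans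
    (Set.ncard_singleton x).le

/-- The DNS condition for the entries of `l`, when `l` is played after the prefix `c`. -/
def IsDNSAfter (G : SimpleGraph V) (c l : List V) : Prop :=
  ∀ i, (hi : i < l.length) → ∃ u ∈ cnbr G l[i], domCount G u (c ++ l.take i) ≤ 1

lemma isDNSAfter_cons {c l : List V} {a : V} :
    IsDNSAfter G c (a :: l) ↔
      (∃ u ∈ cnbr G a, domCount G u c ≤ 1) ∧ IsDNSAfter G (c ++ [a]) l := by
  constructor
  · intro h
    refine ⟨by simpa using h 0 (Nat.succ_pos _), fun i hi => ?_⟩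
    obtain ⟨u, hu, hcu⟩ := h (i + 1) (by simpa using hi)
    exact ⟨u, by simpa using hu, by simpa using hcu⟩
  · rintro ⟨h₀, h⟩ (_ | i) hi
    · simpa using h₀
    · simpa [List.take_succ_cons] using h i (by simpa using hi)

lemma IsDNSAfter.sublist {l' l : List V} (hs : l'.Sublist l) :
    ∀ {c}, IsDNSAfter G c l → IsDNSAfter G c l' := by
  induction hs with
  | slnil => exact id
  | @cons _ _ a _ ih =>
    intro c h i hi
    obtain ⟨u, hu, hcu⟩ := ih (isDNSAfter_cons.mp h).2 i hi
    refine ⟨u, hu, (domCount_mono u fun b hb => ?_).trans hcu⟩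
    simp only [List.mem_append, List.mem_singleton] at hb ⊢
    tauto
  | cons_cons a _ ih =>
    intro c h
    rw [isDNSAfter_cons] at h ⊢
    exact ⟨h.1, ih h.2⟩

lemma isDNS_iff_isDNSAfter_nil {l : List V} : IsDNS G l ↔ l.Nodup ∧ IsDNSAfter G [] l :=
  and_congr_right fun _ =>
    ⟨fun h i hi => by simpa using h ⟨i, hi⟩, fun h i => by simpa using h i i.2⟩

lemma IsDNS.sublist {l' l : List V} (hs : l'.Sublist l) (h : IsDNS G l) : IsDNS G l' := by
  rw [isDNS_iff_isDNSAfter_nil] at h ⊢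
  exact ⟨h.1.sublist hs, h.2.sublist hs⟩

lemma IsDNS.concat {l : List V} {x : V} (h : IsDNS G l) (hx : x ∉ l)
    (hw : ∃ u ∈ cnbr G x, domCount G u l ≤ 1) : IsDNS G (l ++ [x]) := by
  rw [isDNS_iff_isDNSAfter_nil] at h ⊢
  refine ⟨h.1.append (List.nodup_singleton x) (by simpa using hx), fun i hi => ?_⟩
  simp only [List.length_append, List.length_singleton] at hi
  rcases Nat.lt_or_ge i l.length with hil | hil
  · simpa [List.getElem_append_left hil, List.take_append_of_le_length hil.le] using h.2 i hil
  · obtain rfl : i = l.length := by omega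
    simpa using hw

lemma bddAbove_dnsLengths [Finite V] :
    BddAbove {n | ∃ l : List V, IsDNS G l ∧ l.length = n} := by
  have := Fintype.ofFinite V
  exact ⟨Fintype.card V, by rintro _ ⟨l, hl, rfl⟩; exact hl.1.length_le_card⟩

lemma IsDNS.length_le_mdnn [Finite V] {l : List V} (hl : IsDNS G l) : l.length ≤ mdnn G :=
  le_csSup bddAbove_dnsLengths ⟨l, hl, rfl⟩

lemma exists_isDNS_length_eq_mdnn [Finite V] : ∃ l : List V, IsDNS G l ∧ l.length = mdnn G :=
  Nat.sSup_mem (s := {n | ∃ l : List V, IsDNS G l ∧ l.length = n})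
    ⟨0, [], ⟨List.nodup_nil, fun i => i.elim0⟩, rfl⟩ bddAbove_dnsLengths

lemma mem_of_length_eq_mdnn [Finite V] {l : List V} {x : V} (hlen : l.length = mdnn G)
    (hx : x ∉ l → IsDNS G (l ++ [x])) : x ∈ l := by
  by_contra hxl
  have := (hx hxl).length_le_mdnn
  simp only [List.length_append, List.length_singleton] at this
  omega

section Pendant

variable {p v : V} (hpv : G.Adj p v) (huniq : ∀ w, G.Adj p w → w = v)
include hpv huniq

lemma mem_cnbr_pendant_iff {w : V} : p ∈ cnbr G w ↔ w = p ∨ w = v := by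
  rw [mem_cnbr]
  constructor
  · rintro (rfl | hwp)
    · exact .inl rfl
    · exact .inr (huniq w hwp.symm)
  · rintro (rfl | rfl)
    · exact .inl rfl
    · exact .inr hpv.symm

lemma domCount_pendant_le_one {l : List V} (h : p ∉ l ∨ v ∉ l) : domCount G p l ≤ 1 := by
  rcases h with h | h
  · refine domCount_le_one (x := v) fun w hw hpw => ?_
    rcases (mem_cnbr_pendant_iff hpv huniq).1 hpw with rfl | rfl
    exacts [absurd hw h, rfl]
  · refine domCount_le_one (x := p) fun w hw hpw => ?_
    rcases (mem_cnbr_pendant_iff hpv huniq).1 hpw with rfl | rfl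
    exacts [rfl, absurd hw h]

lemma IsDNS.concat_pendant {l : List V} {x : V} (hl : IsDNS G l) (hx : x ∉ l)
    (hxpv : x = p ∨ x = v) : IsDNS G (l ++ [x]) :=
  hl.concat hx ⟨p, (mem_cnbr_pendant_iff hpv huniq).2 hxpv,
    domCount_pendant_le_one hpv huniq (by rcases hxpv with rfl | rfl <;> simp [hx])⟩

end Pendant

theorem stmt7_general [Fintype V] (G : SimpleGraph V) (p v : V)
    (hpv : G.Adj p v) (huniq : ∀ w, G.Adj p w → w = v) :
    (∀ l : List V, IsDNS G l → l.length = mdnn G → p ∈ l ∧ v ∈ l) ∧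
    (∃ l : List V, IsDNS G l ∧ l.length = mdnn G ∧ ∃ l₀, l = l₀ ++ [v, p]) := by
  classical
  have mem_of_max {l : List V} (hl : IsDNS G l) (hlen : l.length = mdnn G) {x : V}
      (hx : x = p ∨ x = v) : x ∈ l :=
    mem_of_length_eq_mdnn hlen fun hxl => hl.concat_pendant hpv huniq hxl hx
  refine ⟨fun l hl hlen => ⟨mem_of_max hl hlen (.inl rfl), mem_of_max hl hlen (.inr rfl)⟩,
    ?_⟩
  obtain ⟨l, hl, hlen⟩ := exists_isDNS_length_eq_mdnn (G := G)
  have hp : p ∈ l := mem_of_max hl hlen (.inl rfl)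
  have hv : v ∈ l.erase p := (List.mem_erase_of_ne hpv.ne.symm).2 (mem_of_max hl hlen (.inr rfl))
  set l₀ := (l.erase p).erase v
  have hpl₀ : p ∉ l₀ := fun h => hl.1.not_mem_erase (List.mem_of_mem_erase h)
  have hvl₀ : v ∉ l₀ := (hl.1.erase p).not_mem_erase
  have hl₀ : IsDNS G l₀ := hl.sublist ((List.erase_sublist).trans List.erase_sublist)
  refine ⟨l₀ ++ [v, p], ?_, ?_, l₀, rfl⟩
  · simpa using (hl₀.concat_pendant hpv huniq hvl₀ (.inr rfl)).concat_pendant hpv huniq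
      (by simp [hpl₀, hpv.ne]) (.inl rfl)
  · have hperm : l.Perm (p :: v :: l₀) :=
      (List.perm_cons_erase hp).trans ((List.perm_cons_erase hv).cons p)
    simpa [← hlen] using hperm.length_eq.symm

/-- a pendant vertex and its neighbor belong to every MDNS, and some MDNS
ends with the neighbor followed by the pendant vertex. -/
theorem stmt7 [Fintype V] (G : SimpleGraph V) (p v : V)
    (he : ∃ a b, G.Adj a b)
    (hpv : G.Adj p v) (huniq : ∀ w, G.Adj p w → w = v) :
    (∀ l : List V, IsDNS G l → l.length = mdnn G → p ∈ l ∧ v ∈ l) ∧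
    (∃ l : List V, IsDNS G l ∧ l.length = mdnn G ∧ ∃ l₀, l = l₀ ++ [v, p]) :=
  stmt7_general G p v hpv huniq
end
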